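/- arXiv:2601.20273 — 4 statements merged into one kernel-verified Lean document; each statement's English description precedes it below -/
import Mathlib

section
/- Let N, M be integers with 2 ≤ M ≤ N, and let P be an integer with M ≤ P ≤ N. Define V_diff = 4N/P² − (4M + 6N)/P − 2P/M + 2N + 6 (as a rational/real number). Then V_diff ≥ 0. -/
/-- Communication-volume difference between USP and StreamFusion is nonnegative. -/
theorem stmt_0 (N M P : ℤ) (hM : 2 ≤ M) (hMN : M ≤ N) (hMP : M ≤ P) (hPN : P ≤ N) :
    (0 : ℝ) ≤ 4 * (N : ℝ) / (P : ℝ) ^ 2 - (4 * (M : ℝ) + 6 * (N : ℝ)) / (P : ℝ)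
      - 2 * (P : ℝ) / (M : ℝ) + 2 * (N : ℝ) + 6 := by
  have key : (0:ℤ) ≤ 2 * (N * M * (P - 1) * (P - 2) - P * (P - M) * (P - 2 * M)) := by
    rcases le_or_gt P (2 * M) with h | h
    · nlinarith [mul_nonneg (mul_nonneg (by nlinarith : (0:ℤ) ≤ N * M) (by linarith : (0:ℤ) ≤ P - 1)) (by linarith : (0:ℤ) ≤ P - 2),
        mul_nonneg (mul_nonneg (by linarith : (0:ℤ) ≤ P) (by linarith : (0:ℤ) ≤ P - M)) (by linarith : (0:ℤ) ≤ 2 * M - P)]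
    · have hNM : 2 * P ≤ N * M := by nlinarith [mul_nonneg (by linarith : (0:ℤ) ≤ N - P) (by linarith : (0:ℤ) ≤ M), mul_nonneg (by linarith : (0:ℤ) ≤ M - 2) (by linarith : (0:ℤ) ≤ P)]
      nlinarith [mul_nonneg (by linarith : (0:ℤ) ≤ N * M - 2 * P) (mul_nonneg (by linarith : (0:ℤ) ≤ P - 1) (by linarith : (0:ℤ) ≤ P - 2)),
        mul_nonneg (by linarith : (0:ℤ) ≤ P) (mul_nonneg (by linarith : (0:ℤ) ≤ P) (by linarith : (0:ℤ) ≤ P - 2 * M)),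
        mul_nonneg (mul_nonneg (by linarith : (0:ℤ) ≤ 2 * M) (by linarith : (0:ℤ) ≤ P)) (by linarith : (0:ℤ) ≤ P - M),
        mul_nonneg (mul_nonneg (by linarith : (0:ℤ) ≤ 3 * P) (by linarith : (0:ℤ) ≤ P)) (by linarith : (0:ℤ) ≤ M - 2),
        (by linarith : (0:ℤ) ≤ P)]
  have keyR : (0:ℝ) ≤ 2 * ((N:ℝ) * M * (P - 1) * (P - 2) - P * (P - M) * (P - 2 * M)) := by
    exact_mod_cast key
  have hMpos : (0:ℝ) < (M:ℝ) := by exact_mod_cast (by linarith : (0:ℤ) < M)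
  have hPpos : (0:ℝ) < (P:ℝ) := by exact_mod_cast (by linarith : (0:ℤ) < P)
  have hpos : (0:ℝ) < (M:ℝ) * (P:ℝ) ^ 2 := by positivity
  rw [show 4 * (N : ℝ) / (P : ℝ) ^ 2 - (4 * (M : ℝ) + 6 * (N : ℝ)) / (P : ℝ)
      - 2 * (P : ℝ) / (M : ℝ) + 2 * (N : ℝ) + 6
      = 2 * ((N:ℝ) * M * (P - 1) * (P - 2) - P * (P - M) * (P - 2 * M)) / ((M:ℝ) * (P:ℝ) ^ 2) from by
    field_simp
    ring]
  exact div_nonneg keyR hpos.le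
end

section
/- Fix a query vector q ∈ ℝᵈ. For a finite list of key–value pairs (kᵢ, vᵢ) with kᵢ ∈ ℝᵈ, vᵢ ∈ ℝᵉ, define the attention state as the triple (O, l, m) where m = maxᵢ ⟨q, kᵢ⟩, l = Σᵢ exp(⟨q, kᵢ⟩ − m), and O = Σᵢ exp(⟨q, kᵢ⟩ − m) vᵢ. Define the merge of two states (O₁,l₁,m₁) ⊕ (O₂,l₂,m₂) = (O, l, m) with m = max(m₁,m₂), l = l₁·e^{m₁−m} + l₂·e^{m₂−m}, O = O₁·e^{m₁−m} + O₂·e^{m₂−m}. Then the merge of the states of two nonempty lists equals the state of their concatenation. -/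
open Real

section aux

lemma sup'_cast {N M : ℕ} [Nonempty (Fin M)] [Nonempty (Fin N)] (h : M = N) (f : Fin N → ℝ) :
    Finset.univ.sup' Finset.univ_nonempty (f ∘ Fin.cast h)
      = Finset.univ.sup' Finset.univ_nonempty f := by
  subst h
  rfl

lemma sum_cast {β : Type*} [AddCommMonoid β] {N M : ℕ} (h : M = N) (f : Fin N → β) :
    ∑ i : Fin M, f (Fin.cast h i) = ∑ i : Fin N, f i := by
  subst h; rfl

instance instNE (a b : ℕ) : Nonempty (Fin (a+1+(b+1))) := ⟨⟨0, by omega⟩⟩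

lemma sup'_append {a b : ℕ} (f : Fin (a+1) → ℝ) (g : Fin (b+1) → ℝ) :
    Finset.univ.sup' Finset.univ_nonempty (Fin.append f g)
      = max (Finset.univ.sup' Finset.univ_nonempty f)
          (Finset.univ.sup' Finset.univ_nonempty g) := by
  apply le_antisymm
  · apply Finset.sup'_le
    intro i _
    refine Fin.addCases (fun j => ?_) (fun j => ?_) i
    · rw [Fin.append_left]
      exact le_max_of_le_left (Finset.le_sup' f (Finset.mem_univ j))
    · rw [Fin.append_right]
      exact le_max_of_le_right (Finset.le_sup' g (Finset.mem_univ j))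
  · rw [max_le_iff]
    constructor <;> apply Finset.sup'_le <;> intro j _
    · calc f j = Fin.append f g (Fin.castAdd _ j) := (Fin.append_left f g j).symm
        _ ≤ _ := Finset.le_sup' _ (Finset.mem_univ _)
    · calc g j = Fin.append f g (Fin.natAdd _ j) := (Fin.append_right f g j).symm
        _ ≤ _ := Finset.le_sup' _ (Finset.mem_univ _)

end aux

/-- The attention state `(O, l, m)` of a nonempty list (indexed by `Fin (n+1)`) of
key–value pairs, with unnormalized output `O = Σᵢ exp(⟨q,kᵢ⟩ − m)·vᵢ`,
`l = Σᵢ exp(⟨q,kᵢ⟩ − m)` and `m = maxᵢ ⟨q,kᵢ⟩`. -/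
noncomputable def attnState (d e n : ℕ) (q : Fin d → ℝ)
    (k : Fin (n + 1) → Fin d → ℝ) (v : Fin (n + 1) → Fin e → ℝ) :
    (Fin e → ℝ) × ℝ × ℝ :=
  let s : Fin (n + 1) → ℝ := fun i => ∑ j, q j * k i j
  let m : ℝ := Finset.univ.sup' Finset.univ_nonempty s
  ((fun jj => ∑ i, Real.exp (s i - m) * v i jj), ∑ i, Real.exp (s i - m), m)

/-- The merge operation on attention states. -/
noncomputable def mergeState (e : ℕ) (A B : (Fin e → ℝ) × ℝ × ℝ) :
    (Fin e → ℝ) × ℝ × ℝ :=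
  let m : ℝ := max A.2.2 B.2.2
  ((fun jj => A.1 jj * Real.exp (A.2.2 - m) + B.1 jj * Real.exp (B.2.2 - m)),
   A.2.1 * Real.exp (A.2.2 - m) + B.2.1 * Real.exp (B.2.2 - m), m)

/-- The merge of the attention states of two nonempty lists of key–value pairs
equals the attention state of their concatenation. -/
theorem stmt_5 (d e n₁ n₂ : ℕ) (q : Fin d → ℝ)
    (k₁ : Fin (n₁ + 1) → Fin d → ℝ) (v₁ : Fin (n₁ + 1) → Fin e → ℝ)
    (k₂ : Fin (n₂ + 1) → Fin d → ℝ) (v₂ : Fin (n₂ + 1) → Fin e → ℝ) :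
    mergeState e (attnState d e n₁ q k₁ v₁) (attnState d e n₂ q k₂ v₂)
      = attnState d e (n₁ + 1 + n₂) q
          (Fin.append k₁ k₂ ∘ Fin.cast (by omega : n₁ + 1 + n₂ + 1 = (n₁ + 1) + (n₂ + 1)))
          (Fin.append v₁ v₂ ∘ Fin.cast (by omega : n₁ + 1 + n₂ + 1 = (n₁ + 1) + (n₂ + 1))) := by
  have h : n₁ + 1 + n₂ + 1 = (n₁ + 1) + (n₂ + 1) := by omega
  simp only [attnState, mergeState]
  set s₁ : Fin (n₁+1) → ℝ := fun i => ∑ j, q j * k₁ i j with hs₁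
  set s₂ : Fin (n₂+1) → ℝ := fun i => ∑ j, q j * k₂ i j with hs₂
  set m₁ : ℝ := Finset.univ.sup' Finset.univ_nonempty s₁ with hm₁
  set m₂ : ℝ := Finset.univ.sup' Finset.univ_nonempty s₂ with hm₂
  have hs : (fun i : Fin (n₁+1+n₂+1) =>
      ∑ j, q j * (Fin.append k₁ k₂ ∘ Fin.cast h) i j)
      = (Fin.append s₁ s₂) ∘ Fin.cast h := by
    funext i
    show ∑ j, q j * Fin.append k₁ k₂ (Fin.cast h i) j = Fin.append s₁ s₂ (Fin.cast h i)
    refine Fin.addCases (fun j => ?_) (fun j => ?_) (Fin.cast h i) <;>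
      simp [Fin.append_left, Fin.append_right, hs₁, hs₂]
  have hs' : ∀ i : Fin (n₁+1+n₂+1),
      (∑ j, q j * (Fin.append k₁ k₂ ∘ Fin.cast h) i j)
        = Fin.append s₁ s₂ (Fin.cast h i) := fun i => congrFun hs i
  rw [hs, sup'_cast h, sup'_append]
  simp only [hs']
  refine Prod.ext ?_ (Prod.ext ?_ rfl)
  · funext jj
    show _ = ∑ x : Fin (n₁+1+n₂+1),
        Real.exp (Fin.append s₁ s₂ (Fin.cast h x) - max m₁ m₂)
          * Fin.append v₁ v₂ (Fin.cast h x) jj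
    rw [sum_cast h (fun x => Real.exp (Fin.append s₁ s₂ x - max m₁ m₂)
        * Fin.append v₁ v₂ x jj)]
    conv_rhs => rw [Fin.sum_univ_add]
    simp only [Fin.append_left, Fin.append_right, ← hs₁, ← hs₂]
    rw [Finset.sum_mul, Finset.sum_mul]
    congr 1 <;> refine Finset.sum_congr rfl fun i _ => ?_ <;>
      rw [mul_right_comm, ← Real.exp_add, sub_add_sub_cancel]
  · show _ = ∑ x : Fin (n₁+1+n₂+1), Real.exp (Fin.append s₁ s₂ (Fin.cast h x) - max m₁ m₂)
    rw [sum_cast h (fun x => Real.exp (Fin.append s₁ s₂ x - max m₁ m₂))]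
    conv_rhs => rw [Fin.sum_univ_add]
    simp only [Fin.append_left, Fin.append_right, ← hs₁, ← hs₂]
    rw [Finset.sum_mul, Finset.sum_mul]
    congr 1 <;> refine Finset.sum_congr rfl fun i _ => ?_ <;>
      rw [← Real.exp_add, sub_add_sub_cancel]
end

section
/- The merge operation on triples (O, l, m) ∈ ℝᵉ × ℝ × ℝ defined by (O₁,l₁,m₁) ⊕ (O₂,l₂,m₂) = (O₁·e^{m₁−m} + O₂·e^{m₂−m}, l₁·e^{m₁−m} + l₂·e^{m₂−m}, m) with m = max(m₁,m₂) is commutative and associative. -/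
private lemma key (x m M : ℝ) :
    Real.exp (x - m) * Real.exp (m - M) = Real.exp (x - M) := by
  rw [← Real.exp_add]; ring_nf

/-- The attention-state merge operation is commutative and associative. -/
theorem stmt_6 (e : ℕ) :
    (∀ A B : (Fin e → ℝ) × ℝ × ℝ, mergeState e A B = mergeState e B A)
    ∧ (∀ A B C : (Fin e → ℝ) × ℝ × ℝ,
        mergeState e (mergeState e A B) C = mergeState e A (mergeState e B C)) := by
  constructor
  · intro A B
    simp only [mergeState, max_comm A.2.2 B.2.2]
    refine Prod.ext (funext fun j => by ring) (Prod.ext (by ring) rfl)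
  · intro A B C
    simp only [mergeState]
    refine Prod.ext (funext fun j => ?_) (Prod.ext ?_ (max_assoc _ _ _)) <;>
      (simp only [add_mul, mul_assoc, key, max_assoc]; ring)
end

section
/- Let (O, l, m) be the attention state of a nonempty list of key–value pairs, with O = Σᵢ exp(sᵢ − m)·vᵢ, l = Σᵢ exp(sᵢ − m), m = maxᵢ sᵢ, where sᵢ = ⟨q, kᵢ⟩. Then O / l = Σᵢ softmax(s)ᵢ · vᵢ, i.e., dividing the unnormalized merged output by the running sum yields the exact softmax-weighted attention output, where softmax(s)ᵢ = exp(sᵢ) / Σⱼ exp(sⱼ). -/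
/-- Dividing the unnormalized max-shifted attention output by the running sum yields
the exact softmax-weighted attention output. -/
theorem stmt_7 (d e n : ℕ) (q : Fin d → ℝ)
    (k : Fin (n + 1) → Fin d → ℝ) (v : Fin (n + 1) → Fin e → ℝ) :
    ∀ jj : Fin e,
      (∑ i, Real.exp ((∑ j, q j * k i j)
            - Finset.univ.sup' Finset.univ_nonempty (fun i' => ∑ j, q j * k i' j)) * v i jj)
        / (∑ i, Real.exp ((∑ j, q j * k i j)
            - Finset.univ.sup' Finset.univ_nonempty (fun i' => ∑ j, q j * k i' j)))
      = ∑ i, (Real.exp (∑ j, q j * k i j) / ∑ i', Real.exp (∑ j, q j * k i' j)) * v i jj := by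
  intro jj
  set m := Finset.univ.sup' Finset.univ_nonempty (fun i' => ∑ j, q j * (k i' : Fin d → ℝ) j) with hm
  have hL : (0:ℝ) < ∑ i, Real.exp (∑ j, q j * k i j) :=
    Finset.sum_pos (fun i _ => Real.exp_pos _) Finset.univ_nonempty
  simp only [Real.exp_sub, div_mul_eq_mul_div, ← Finset.sum_div]
  rw [div_div_div_cancel_right₀ (Real.exp_pos m).ne']
end
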